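/- For every nonnegative integer k and positive integer n, ∫₀¹ x^{n-1}·log^k(1-x)/√(1-x) dx = (-1)^k · k! · 2^k · (4^n/(n·C(2n,n))) · tₙ⋆(1_k), where tₙ⋆(1_k) = ∑_{n ≥ n₁ ≥ ⋯ ≥ n_k ≥ 1} ∏_{j=1}^k 1/(2n_j - 1). -/

import Mathlib

/-!
Write `I m j = ∫₀¹ xᵐ logʲ(1-x) / √(1-x) dx`. Integrating the derivative of
`xᵐ √(1-x) logʲ(1-x)`, which vanishes at both ends unless `m = j = 0`, gives
`(2m+3) I (m+1) j = (2m+2) I m j - 2j I (m+1) (j-1)`, `I 0 (j+1) = -2(j+1) I 0 j` and `I 0 0 = 2`.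
The closed form obeys the same relations, because `w n = 4ⁿ / (n C(2n,n))` has
`(2n+1) w (n+1) = 2n w n` and `tₙ₊₁⋆(1_{k+1}) = tₙ⋆(1_{k+1}) + tₙ₊₁⋆(1_k) / (2n+1)`;
a double induction on `n` and `k` concludes.
-/

open Finset

/-- Multiple t-harmonic star sum with `k` ones:
`tₙ⋆(1_k) = ∑_{n ≥ n₁ ≥ ⋯ ≥ n_k ≥ 1} ∏ 1/(2n_j-1)`. -/
noncomputable def tstarharm : ℕ → ℕ → ℝ
  | 0, _ => 1
  | (k+1), n => ∑ j ∈ Finset.Icc 1 n, (1 / (2 * (j : ℝ) - 1)) * tstarharm k j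

open Real MeasureTheory intervalIntegral Filter Set Topology

lemma abs_log_pow_le_mul_rpow_neg (j : ℕ) {ε u : ℝ} (hε : 0 < ε) (hu0 : 0 < u) (hu1 : u ≤ 1) :
    |log u| ^ j ≤ (j / ε) ^ j * u ^ (-ε) := by
  rcases Nat.eq_zero_or_pos j with rfl | hj
  · simpa using one_le_rpow_of_pos_of_le_one_of_nonpos hu0 hu1 (neg_nonpos.2 hε.le)
  have hj' : (0:ℝ) < j := Nat.cast_pos.2 hj
  have h := (abs_log_mul_self_rpow_lt u (ε / j) hu0 hu1 (by positivity)).le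
  rw [abs_mul, abs_of_pos (rpow_pos_of_pos hu0 _), one_div_div] at h
  calc |log u| ^ j = (|log u| * u ^ (ε / j)) ^ j * u ^ (-ε) := by
        rw [mul_pow, ← rpow_natCast (u ^ _), ← rpow_mul hu0.le, div_mul_cancel₀ _ hj'.ne',
          mul_assoc, ← rpow_add hu0, add_neg_cancel, rpow_zero, mul_one]
    _ ≤ (j / ε) ^ j * u ^ (-ε) := by gcongr

lemma intervalIntegrable_pow_mul_log_one_sub_pow_div_sqrt (m j : ℕ) :
    IntervalIntegrable (fun x => x ^ m * log (1 - x) ^ j / √(1 - x)) volume 0 1 := by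
  have hdom : IntervalIntegrable (fun x => ((j:ℝ) / (1/4)) ^ j * (1 - x) ^ (-(3/4) : ℝ))
      volume 0 1 := by
    have h : IntervalIntegrable (fun x : ℝ => x ^ (-(3/4) : ℝ)) volume 0 1 :=
      intervalIntegrable_rpow' (by norm_num)
    simpa using (h.comp_sub_left 1).symm.const_mul _
  refine hdom.mono_fun' (Measurable.aestronglyMeasurable (by fun_prop)) ?_
  rw [EventuallyLE, uIoc_of_le zero_le_one, ae_restrict_iff' measurableSet_Ioc]
  refine .of_forall fun x ⟨hx0, hx1⟩ => ?_
  rcases hx1.eq_or_lt with rfl | hx1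
  · simp
  have hu : 0 < 1 - x := by linarith
  calc ‖x ^ m * log (1 - x) ^ j / √(1 - x)‖
      = |x| ^ m * |log (1 - x)| ^ j * (1 - x) ^ (-(1/2) : ℝ) := by
        rw [Real.norm_eq_abs, abs_div, abs_mul, abs_pow, abs_pow, abs_of_pos (sqrt_pos.2 hu),
          sqrt_eq_rpow, rpow_neg hu.le, div_eq_mul_inv]
    _ ≤ 1 * ((j / (1/4)) ^ j * (1 - x) ^ (-(1/4) : ℝ)) * (1 - x) ^ (-(1/2) : ℝ) := by
        gcongr
        · exact pow_le_one₀ (abs_nonneg x) (by rw [abs_of_pos hx0]; linarith)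
        · exact abs_log_pow_le_mul_rpow_neg j (by norm_num) hu (by linarith)
    _ = (j / (1/4)) ^ j * (1 - x) ^ (-(3/4) : ℝ) := by
        rw [one_mul, mul_assoc, ← rpow_add hu]; norm_num

lemma tendsto_sqrt_mul_log_pow_nhdsGT_zero (j : ℕ) :
    Tendsto (fun u => √u * log u ^ j) (𝓝[>] 0) (𝓝 0) := by
  rcases Nat.eq_zero_or_pos j with rfl | hj
  · simpa using (continuous_sqrt.tendsto 0).mono_left nhdsWithin_le_nhds
  have hr : (0:ℝ) < 1 / (2 * j) := by positivity
  have h := (tendsto_log_mul_rpow_nhdsGT_zero hr).pow j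
  rw [zero_pow hj.ne'] at h
  refine h.congr' (eventually_mem_nhdsWithin.mono fun u (hu : 0 < u) => ?_)
  dsimp only
  rw [mul_pow, ← rpow_natCast (u ^ _), ← rpow_mul hu.le, sqrt_eq_rpow, mul_comm]
  congr 2
  field_simp

lemma hasDerivAt_pow_mul_sqrt_one_sub_mul_log_pow (m j : ℕ) {x : ℝ} (hx : x < 1) :
    HasDerivAt (fun x => x ^ m * (√(1 - x) * log (1 - x) ^ j))
      (m * (x ^ (m - 1) * log (1 - x) ^ j / √(1 - x))
        - (m + 1/2) * (x ^ m * log (1 - x) ^ j / √(1 - x))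
        - j * (x ^ m * log (1 - x) ^ (j - 1) / √(1 - x))) x := by
  have hu : 0 < 1 - x := by linarith
  have h1 : HasDerivAt (fun y => 1 - y) (-1) x := by simpa using (hasDerivAt_id x).const_sub 1
  have hsqrt := (hasDerivAt_sqrt hu.ne').comp x h1
  have hlog := ((hasDerivAt_log hu.ne').comp x h1).pow j
  refine ((hasDerivAt_pow m x).mul (hsqrt.mul hlog)).congr_deriv ?_
  have hxm : (m:ℝ) * x ^ m = m * x ^ (m - 1) * x := by
    cases m with
    | zero => simp
    | succ p => rw [Nat.add_sub_cancel, pow_succ]; ring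
  have hs : √(1 - x) ^ 2 = 1 - x := sq_sqrt hu.le
  have hs0 := (sqrt_pos.2 hu).ne'
  simp only [Function.comp_def, Pi.mul_apply, Pi.pow_apply]
  field_simp
  rw [hs]
  linear_combination 2 * (1 - x) * log (1 - x) ^ j * hxm

lemma tendsto_one_sub_nhdsLT_one_nhdsGT_zero :
    Tendsto (fun x : ℝ => 1 - x) (𝓝[<] 1) (𝓝[>] 0) := by
  have := ((continuous_const.sub continuous_id).tendsto' (1:ℝ) 0 (sub_self 1)).mono_left
    (nhdsWithin_le_nhds (s := Iio 1))
  exact tendsto_nhdsWithin_of_tendsto_nhds_of_eventually_within _ this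
    (eventually_mem_nhdsWithin.mono fun x (hx : x < 1) => sub_pos.2 hx)

noncomputable def logSqrtMoment (m j : ℕ) : ℝ :=
  ∫ x in (0:ℝ)..1, x ^ m * log (1 - x) ^ j / √(1 - x)

/-- The truncated `m - 1` and `j - 1` are harmless since those terms carry the factors `m` and `j`;
the boundary term `0 ^ m * 0 ^ j` is `1` exactly when `m = j = 0`. -/
theorem logSqrtMoment_recurrence (m j : ℕ) :
    m * logSqrtMoment (m - 1) j - (m + 1/2) * logSqrtMoment m j - j * logSqrtMoment m (j - 1)
      = -(0 ^ m * 0 ^ j) := by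
  have hint := intervalIntegrable_pow_mul_log_one_sub_pow_div_sqrt
  have hcomb := (((hint (m - 1) j).const_mul (m : ℝ)).sub ((hint m j).const_mul (m + 1/2 : ℝ))).sub
    ((hint m (j - 1)).const_mul (j : ℝ))
  have h0 : Tendsto (fun x : ℝ => x ^ m * (√(1 - x) * log (1 - x) ^ j)) (𝓝[>] 0)
      (𝓝 (0 ^ m * 0 ^ j)) := by
    have : ContinuousAt (fun x : ℝ => x ^ m * (√(1 - x) * log (1 - x) ^ j)) 0 := by
      fun_prop (disch := norm_num)
    simpa using this.tendsto.mono_left nhdsWithin_le_nhds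
  have h1 : Tendsto (fun x : ℝ => x ^ m * (√(1 - x) * log (1 - x) ^ j)) (𝓝[<] 1) (𝓝 0) := by
    simpa using ((continuous_pow m).tendsto 1).mono_left nhdsWithin_le_nhds |>.mul
      ((tendsto_sqrt_mul_log_pow_nhdsGT_zero j).comp tendsto_one_sub_nhdsLT_one_nhdsGT_zero)
  have hftc := integral_eq_sub_of_hasDerivAt_of_tendsto zero_lt_one
    (fun x hx => hasDerivAt_pow_mul_sqrt_one_sub_mul_log_pow m j hx.2) hcomb h0 h1
  rw [integral_sub (((hint _ _).const_mul _).sub ((hint _ _).const_mul _)) ((hint _ _).const_mul _),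
    integral_sub ((hint _ _).const_mul _) ((hint _ _).const_mul _),
    intervalIntegral.integral_const_mul, intervalIntegral.integral_const_mul,
    intervalIntegral.integral_const_mul, zero_sub] at hftc
  exact hftc

lemma logSqrtMoment_zero_zero : logSqrtMoment 0 0 = 2 := by
  linarith [logSqrtMoment_recurrence 0 0]

lemma logSqrtMoment_zero_succ (j : ℕ) :
    logSqrtMoment 0 (j + 1) = -(2 * (j + 1)) * logSqrtMoment 0 j := by
  have h := logSqrtMoment_recurrence 0 (j + 1)
  norm_num at h
  linarith

lemma logSqrtMoment_succ (m j : ℕ) :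
    (2 * m + 3) * logSqrtMoment (m + 1) j
      = (2 * m + 2) * logSqrtMoment m j - 2 * j * logSqrtMoment (m + 1) (j - 1) := by
  have h := logSqrtMoment_recurrence (m + 1) j
  norm_num at h
  linarith

noncomputable def centralBinomWeight (n : ℕ) : ℝ := 4 ^ n / (n * (Nat.choose (2 * n) n : ℝ))

lemma centralBinomWeight_one : centralBinomWeight 1 = 2 := by
  norm_num [centralBinomWeight]

lemma centralBinomWeight_succ {n : ℕ} (hn : n ≠ 0) :
    (2 * n + 1) * centralBinomWeight (n + 1) = 2 * n * centralBinomWeight n := by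
  have h : ((n + 1) * Nat.centralBinom (n + 1) : ℝ) = 2 * (2 * n + 1) * Nat.centralBinom n := by
    exact_mod_cast Nat.succ_mul_centralBinom_succ n
  have hc := Nat.centralBinom_pos n
  have hn' : (n : ℝ) ≠ 0 := Nat.cast_ne_zero.2 hn
  simp only [centralBinomWeight, ← Nat.centralBinom_eq_two_mul_choose]
  push_cast
  rw [h]
  field_simp
  ring

lemma tstarharm_one (k : ℕ) : tstarharm k 1 = 1 := by
  induction k with
  | zero => rfl
  | succ k ih => norm_num [tstarharm, ih]

lemma tstarharm_succ_succ (k n : ℕ) :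
    tstarharm (k + 1) (n + 1) = tstarharm (k + 1) n + tstarharm k (n + 1) / (2 * n + 1) := by
  rw [tstarharm, tstarharm, Finset.sum_Icc_succ_top (by omega)]
  push_cast
  ring

theorem logSqrtMoment_eq (k m : ℕ) :
    logSqrtMoment m k =
      (-1) ^ k * k.factorial * 2 ^ k * centralBinomWeight (m + 1) * tstarharm k (m + 1) := by
  induction m generalizing k with
  | zero =>
    induction k with
    | zero => simp [logSqrtMoment_zero_zero, centralBinomWeight_one, tstarharm]
    | succ k ih =>
      rw [logSqrtMoment_zero_succ, ih, tstarharm_one, tstarharm_one, Nat.factorial_succ]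
      push_cast
      ring
  | succ m ihm =>
    have hw := centralBinomWeight_succ (n := m + 1) (by omega)
    have hm : (2 * m + 3 : ℝ) ≠ 0 := by positivity
    induction k with
    | zero =>
      refine mul_left_cancel₀ hm ?_
      rw [logSqrtMoment_succ, ihm]
      push_cast at hw
      simp only [tstarharm]
      linear_combination -hw
    | succ k ihk =>
      refine mul_left_cancel₀ hm ?_
      rw [logSqrtMoment_succ, ihm, Nat.add_sub_cancel, ihk, tstarharm_succ_succ k (m + 1),
        Nat.factorial_succ]
      push_cast at hw ⊢
      field_simp
      linear_combination
        -(2 * m + 3) * (-1) ^ (k + 1) * 2 ^ (k + 1) * tstarharm (k + 1) (m + 1) * hw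

theorem integral_pow_log_pow_div_sqrt (k n : ℕ) (hn : 1 ≤ n) :
    ∫ x in (0:ℝ)..1, x ^ (n - 1) * (Real.log (1 - x)) ^ k / Real.sqrt (1 - x) =
      (-1) ^ k * (k.factorial : ℝ) * 2 ^ k *
        (4 ^ n / ((n : ℝ) * (Nat.choose (2 * n) n : ℝ))) * tstarharm k n := by
  obtain ⟨m, rfl⟩ := Nat.exists_eq_add_of_le' hn
  exact logSqrtMoment_eq k m
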